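/- arXiv:1512.04222 — 2 statements merged into one kernel-verified Lean document; each statement's English description precedes it below -/
import Mathlib

section
/- Let n ≥ 2, ρ ∈ (0, 1/2], and ε ∈ (0, 1). Let (G(k))_{k≥1} be a sequence of rooted communication graphs on n nodes and let Ĝ(ℓ) = G((ℓ−1)(n−1)+1) ∘ ⋯ ∘ G(ℓ(n−1)) be the communication graph at macro-round ℓ. Let x : ℕ → ℝ^n satisfy x(0) ∈ [0,1]^n and, for each ℓ ≥ 1, x(ℓ) is a ρ-safe update of x(ℓ−1) along Ĝ(ℓ). Then δ(x(L)) ≤ ε for L = ⌈log_{1/(1−ρ)}(1/ε)⌉. (In a rooted network model, the amortized version of a ρ-safe averaging algorithm achieves ε-agreement in (n−1)·⌈log_{1/(1−ρ)}(1/ε)⌉ rounds.) -/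
/-- `δ(x) = max_p x_p − min_p x_p`. -/
noncomputable def delta {n : ℕ} (x : Fin n → ℝ) : ℝ :=
  sSup (Set.range x) - sInf (Set.range x)

/-- A communication graph is rooted if there is a node `r` from which every node is
reachable by a directed path. -/
def Rooted {n : ℕ} (E : Fin n → Fin n → Prop) : Prop :=
  ∃ r, ∀ p, Relation.ReflTransGen E r p

/-- `ProdSeg G a m` is the product `G (a+1) ∘ G (a+2) ∘ ⋯ ∘ G (a+m)`, where the product
`G ∘ H` has an edge `(p,q)` iff there is `r` with `(p,r) ∈ G` and `(r,q) ∈ H`;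
the empty product is the identity graph. -/
def ProdSeg {n : ℕ} (G : ℕ → Fin n → Fin n → Prop) (a : ℕ) : ℕ → Fin n → Fin n → Prop
  | 0 => fun p q => p = q
  | m + 1 => fun p q => ∃ r, ProdSeg G a m p r ∧ G (a + m + 1) r q

/-- `x'` is a ρ-safe update of `x` along the graph `E`. -/
def SafeUpdate {n : ℕ} (ρ : ℝ) (E : Fin n → Fin n → Prop) (x x' : Fin n → ℝ) : Prop :=
  ∀ p, ρ * sSup (x '' {q | E q p}) + (1 - ρ) * sInf (x '' {q | E q p}) ≤ x' p ∧
       x' p ≤ (1 - ρ) * sSup (x '' {q | E q p}) + ρ * sInf (x '' {q | E q p})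


/-!
Two nodes `q₁, q₂` always have a common in-neighbour in a product of `n − 1` rooted graphs
with self-loops: walking backwards through the product, the sets of nodes with a path to
`q₁` and to `q₂` only grow, and as long as they are disjoint their union gains a node at
each step, for otherwise both sets would be closed under in-neighbours in a rooted graph
and would both contain its root. A safe update along a graph in which every two nodes
share an in-neighbour `s` contracts `δ` by `1 − ρ`, because `x s` separates the upper
bound on `x' p` from the lower bound on `x' p'`. After `L` macro-rounds
`δ ≤ (1 − ρ)^L ≤ ε`.
-/

section InNeighbors

variable {α : Type*} {E : α → α → Prop}

def inNeighbors (E : α → α → Prop) (S : Set α) : Set α :=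
  {p | ∃ r ∈ S, E p r}

lemma subset_inNeighbors (hrefl : ∀ p, E p p) (S : Set α) : S ⊆ inNeighbors E S :=
  fun p hp => ⟨p, hp, hrefl p⟩

lemma mem_of_reflTransGen_of_inNeighbors_subset {S : Set α} (hS : inNeighbors E S ⊆ S)
    {a b : α} (hab : Relation.ReflTransGen E a b) (hb : b ∈ S) : a ∈ S := by
  induction hab with
  | refl => exact hb
  | tail _ hcd ih => exact ih (hS ⟨_, hb, hcd⟩)

lemma inNeighbors_subset_of_disjoint (hrefl : ∀ p, E p p) {S T : Set α}
    (hST : Disjoint (inNeighbors E S) (inNeighbors E T))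
    (hcov : inNeighbors E S ∪ inNeighbors E T ⊆ S ∪ T) : inNeighbors E S ⊆ S := fun _ hp =>
  (hcov (Or.inl hp)).resolve_right fun hpT =>
    Set.disjoint_left.mp hST hp (subset_inNeighbors hrefl T hpT)

end InNeighbors

section Rooted

variable {n : ℕ} {E : Fin n → Fin n → Prop}

lemma Rooted.ncard_union_lt_of_disjoint (hroot : Rooted E) (hrefl : ∀ p, E p p)
    {S₁ S₂ : Set (Fin n)} (h₁ : S₁.Nonempty) (h₂ : S₂.Nonempty)
    (hdisj : Disjoint (inNeighbors E S₁) (inNeighbors E S₂)) :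
    (S₁ ∪ S₂).ncard < (inNeighbors E S₁ ∪ inNeighbors E S₂).ncard := by
  have hsub : S₁ ∪ S₂ ⊆ inNeighbors E S₁ ∪ inNeighbors E S₂ :=
    Set.union_subset_union (subset_inNeighbors hrefl S₁) (subset_inNeighbors hrefl S₂)
  refine Set.ncard_lt_ncard (hsub.ssubset_of_not_subset fun hcov => ?_)
  have hcov' : inNeighbors E S₂ ∪ inNeighbors E S₁ ⊆ S₂ ∪ S₁ := by
    rwa [Set.union_comm, Set.union_comm S₂]
  obtain ⟨r, hr⟩ := hroot
  obtain ⟨q₁, hq₁⟩ := h₁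
  obtain ⟨q₂, hq₂⟩ := h₂
  have hr₁ : r ∈ S₁ := mem_of_reflTransGen_of_inNeighbors_subset
    (inNeighbors_subset_of_disjoint hrefl hdisj hcov) (hr q₁) hq₁
  have hr₂ : r ∈ S₂ := mem_of_reflTransGen_of_inNeighbors_subset
    (inNeighbors_subset_of_disjoint hrefl hdisj.symm hcov') (hr q₂) hq₂
  exact Set.disjoint_left.mp hdisj (subset_inNeighbors hrefl S₁ hr₁)
    (subset_inNeighbors hrefl S₂ hr₂)

end Rooted

section ProdSeg

variable {n : ℕ} {G : ℕ → Fin n → Fin n → Prop}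

lemma prodSeg_refl (hrefl : ∀ k, 1 ≤ k → ∀ p, G k p p) (a m : ℕ) (p : Fin n) :
    ProdSeg G a m p p := by
  induction m with
  | zero => rfl
  | succ m ih => exact ⟨p, ih, hrefl _ (by omega) p⟩

lemma prodSeg_succ_iff_left (a m : ℕ) (p q : Fin n) :
    ProdSeg G a (m + 1) p q ↔ ∃ r, G (a + 1) p r ∧ ProdSeg G (a + 1) m r q := by
  induction m generalizing q with
  | zero => simp [ProdSeg]
  | succ m ih =>
    have hidx : a + (m + 1) + 1 = a + 1 + m + 1 := by omega
    constructor
    · rintro ⟨s, hs, hsq⟩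
      obtain ⟨r, hpr, hrs⟩ := (ih s).mp hs
      exact ⟨r, hpr, s, hrs, hidx ▸ hsq⟩
    · rintro ⟨r, hpr, s, hrs, hsq⟩
      exact ⟨s, (ih s).mpr ⟨r, hpr, hrs⟩, hidx ▸ hsq⟩

lemma setOf_prodSeg_succ (a m : ℕ) (q : Fin n) :
    {p | ProdSeg G a (m + 1) p q} = inNeighbors (G (a + 1)) {p | ProdSeg G (a + 1) m p q} :=
  Set.ext fun p => (prodSeg_succ_iff_left a m p q).trans (exists_congr fun _ => and_comm)

lemma add_two_le_ncard_of_disjoint_prodSeg (hrefl : ∀ k, 1 ≤ k → ∀ p, G k p p)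
    (hrooted : ∀ k, 1 ≤ k → Rooted (G k)) (m a : ℕ) (q₁ q₂ : Fin n)
    (hdisj : Disjoint {p | ProdSeg G a m p q₁} {p | ProdSeg G a m p q₂}) :
    m + 2 ≤ ({p | ProdSeg G a m p q₁} ∪ {p | ProdSeg G a m p q₂}).ncard := by
  induction m generalizing a with
  | zero =>
    have hne : q₁ ≠ q₂ := fun h =>
      Set.disjoint_left.mp hdisj rfl (show ProdSeg G a 0 q₁ q₂ from h)
    show 2 ≤ ({q₁} ∪ {q₂} : Set (Fin n)).ncard
    rw [Set.singleton_union, Set.ncard_pair hne]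
  | succ m ih =>
    rw [setOf_prodSeg_succ, setOf_prodSeg_succ] at hdisj ⊢
    have hrefl' : ∀ p, G (a + 1) p p := hrefl (a + 1) (by omega)
    have hdisj' := hdisj.mono (subset_inNeighbors hrefl' _) (subset_inNeighbors hrefl' _)
    have hne : ∀ q, {p | ProdSeg G (a + 1) m p q}.Nonempty := fun q =>
      ⟨q, prodSeg_refl hrefl _ _ q⟩
    have hlt := (hrooted (a + 1) (by omega)).ncard_union_lt_of_disjoint hrefl'
      (hne q₁) (hne q₂) hdisj
    have := ih (a + 1) hdisj'
    omega

lemma exists_prodSeg_common_source (hrefl : ∀ k, 1 ≤ k → ∀ p, G k p p)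
    (hrooted : ∀ k, 1 ≤ k → Rooted (G k)) (a : ℕ) (q₁ q₂ : Fin n) :
    ∃ p, ProdSeg G a (n - 1) p q₁ ∧ ProdSeg G a (n - 1) p q₂ := by
  by_contra! hsplit
  have hdisj : Disjoint {p | ProdSeg G a (n - 1) p q₁} {p | ProdSeg G a (n - 1) p q₂} :=
    Set.disjoint_left.mpr hsplit
  have hle := add_two_le_ncard_of_disjoint_prodSeg hrefl hrooted (n - 1) a q₁ q₂ hdisj
  have hcard := Set.ncard_le_card
    ({p | ProdSeg G a (n - 1) p q₁} ∪ {p | ProdSeg G a (n - 1) p q₂})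
  rw [Nat.card_fin] at hcard
  omega

end ProdSeg

section Delta

variable {n : ℕ}

lemma delta_nonneg (x : Fin n → ℝ) : 0 ≤ delta x :=
  sub_nonneg.mpr <| Real.sInf_le_sSup _ (Set.finite_range x).bddBelow
    (Set.finite_range x).bddAbove

lemma sub_le_delta (x : Fin n → ℝ) (p q : Fin n) : x p - x q ≤ delta x :=
  sub_le_sub (le_csSup (Set.finite_range x).bddAbove ⟨p, rfl⟩)
    (csInf_le (Set.finite_range x).bddBelow ⟨q, rfl⟩)

lemma delta_le_of_forall_sub_le {x : Fin n → ℝ} {c : ℝ} (hc : 0 ≤ c)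
    (h : ∀ p q, x p - x q ≤ c) : delta x ≤ c := by
  rcases isEmpty_or_nonempty (Fin n) with _ | _
  · simpa only [delta, Set.range_eq_empty, Real.sSup_empty, Real.sInf_empty, sub_zero] using hc
  · obtain ⟨p, hp⟩ := (Set.range_nonempty x).csSup_mem (Set.finite_range x)
    obtain ⟨q, hq⟩ := (Set.range_nonempty x).csInf_mem (Set.finite_range x)
    rw [delta, ← hp, ← hq]
    exact h p q

lemma delta_le_of_safeUpdate {ρ : ℝ} (hρ0 : 0 ≤ ρ) (hρ1 : ρ ≤ 1)
    {E : Fin n → Fin n → Prop}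
    (hE : ∀ p p', ∃ s, E s p ∧ E s p') {x x' : Fin n → ℝ} (h : SafeUpdate ρ E x x') :
    delta x' ≤ (1 - ρ) * delta x := by
  refine delta_le_of_forall_sub_le (mul_nonneg (by linarith) (delta_nonneg x)) fun p p' => ?_
  obtain ⟨s, hsp, hsp'⟩ := hE p p'
  set N := fun q => x '' {r | E r q}
  have hfin : ∀ q, (N q).Finite := fun q => (Set.toFinite _).image x
  have hs : ∀ {q}, E s q → x s ∈ N q := fun hq => ⟨s, hq, rfl⟩
  have hlow : sInf (N p) ≤ x s := csInf_le (hfin p).bddBelow (hs hsp)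
  have hhigh : x s ≤ sSup (N p') := le_csSup (hfin p').bddAbove (hs hsp')
  have hspread : sSup (N p) - sInf (N p') ≤ delta x := by
    obtain ⟨a, -, ha⟩ := (Set.nonempty_of_mem (hs hsp)).csSup_mem (hfin p)
    obtain ⟨b, -, hb⟩ := (Set.nonempty_of_mem (hs hsp')).csInf_mem (hfin p')
    rw [← ha, ← hb]
    exact sub_le_delta x a b
  have hmid : ρ * (sInf (N p) - sSup (N p')) ≤ 0 :=
    mul_nonpos_of_nonneg_of_nonpos hρ0 (by linarith)
  have hscale := mul_le_mul_of_nonneg_left hspread (by linarith : 0 ≤ 1 - ρ)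
  linarith [(h p).2, (h p').1]

end Delta

lemma pow_ceil_logb_le {c ε : ℝ} (hc0 : 0 < c) (hc1 : c < 1) (hε : 0 < ε) :
    c ^ ⌈Real.logb (1 / c) (1 / ε)⌉₊ ≤ ε := by
  have hlogb : Real.logb (1 / c) (1 / ε) = Real.logb c ε := by
    rw [one_div, one_div, Real.logb_inv, Real.logb_inv_base, neg_neg]
  calc c ^ ⌈Real.logb (1 / c) (1 / ε)⌉₊
      = c ^ (⌈Real.logb c ε⌉₊ : ℝ) := by rw [hlogb, Real.rpow_natCast]
    _ ≤ c ^ Real.logb c ε := Real.rpow_le_rpow_of_exponent_ge hc0 hc1.le (Nat.le_ceil _)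
    _ = ε := Real.rpow_logb hc0 hc1.ne hε

theorem amortized_safe_eps_agreement_general
    (n : ℕ) (ρ ε : ℝ) (hρ0 : 0 < ρ) (hρ2 : ρ ≤ 1 / 2)
    (hε0 : 0 < ε)
    (G : ℕ → Fin n → Fin n → Prop)
    (hrefl : ∀ k, 1 ≤ k → ∀ p, G k p p)
    (hrooted : ∀ k, 1 ≤ k → Rooted (G k))
    (x : ℕ → Fin n → ℝ)
    (hx0 : ∀ p, x 0 p ∈ Set.Icc (0 : ℝ) 1)
    -- at each macro-round `l ≥ 1`, `x l` is a ρ-safe update of `x (l−1)` along the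
    -- macro-round graph `Ĝ(l) = G((l−1)(n−1)+1) ∘ ⋯ ∘ G(l(n−1))`
    (hupd : ∀ l, 1 ≤ l →
      SafeUpdate ρ (ProdSeg G ((l - 1) * (n - 1)) (n - 1)) (x (l - 1)) (x l)) :
    delta (x ⌈Real.logb (1 / (1 - ρ)) (1 / ε)⌉₊) ≤ ε := by
  set L := ⌈Real.logb (1 / (1 - ρ)) (1 / ε)⌉₊
  have hc : 0 < 1 - ρ := by linarith
  have hstep : ∀ l, delta (x (l + 1)) ≤ (1 - ρ) * delta (x l) := fun l =>
    delta_le_of_safeUpdate hρ0.le (by linarith)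
      (exists_prodSeg_common_source hrefl hrooted (l * (n - 1)))
      (by simpa using hupd (l + 1) (by omega))
  have hδ0 : delta (x 0) ≤ 1 := delta_le_of_forall_sub_le zero_le_one fun p q => by
    linarith [(hx0 p).2, (hx0 q).1]
  calc delta (x L) ≤ (1 - ρ) ^ L * delta (x 0) :=
        le_geom (u := fun l => delta (x l)) hc.le L fun l _ => hstep l
    _ ≤ (1 - ρ) ^ L := mul_le_of_le_one_right (pow_nonneg hc.le L) hδ0
    _ ≤ ε := pow_ceil_logb_le hc (by linarith) hε0

theorem amortized_safe_eps_agreement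
    (n : ℕ) (hn : 2 ≤ n) (ρ ε : ℝ) (hρ0 : 0 < ρ) (hρ2 : ρ ≤ 1 / 2)
    (hε0 : 0 < ε) (hε1 : ε < 1)
    (G : ℕ → Fin n → Fin n → Prop)
    (hrefl : ∀ k, 1 ≤ k → ∀ p, G k p p)
    (hrooted : ∀ k, 1 ≤ k → Rooted (G k))
    (x : ℕ → Fin n → ℝ)
    (hx0 : ∀ p, x 0 p ∈ Set.Icc (0 : ℝ) 1)
    -- at each macro-round `l ≥ 1`, `x l` is a ρ-safe update of `x (l−1)` along the
    -- macro-round graph `Ĝ(l) = G((l−1)(n−1)+1) ∘ ⋯ ∘ G(l(n−1))`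
    (hupd : ∀ l, 1 ≤ l →
      SafeUpdate ρ (ProdSeg G ((l - 1) * (n - 1)) (n - 1)) (x (l - 1)) (x l)) :
    delta (x ⌈Real.logb (1 / (1 - ρ)) (1 / ε)⌉₊) ≤ ε :=
  amortized_safe_eps_agreement_general n ρ ε hρ0 hρ2 hε0 G hrefl hrooted x hx0 hupd
end

section
/- Let n ≥ 2, let Q ≥ 3 be an integer, and let ε be a real number with 2/Q < ε ≤ 1. Let (G(k))_{k≥1} be rooted communication graphs on n nodes and Ĝ(ℓ) = G((ℓ−1)(n−1)+1) ∘ ⋯ ∘ G(ℓ(n−1)) the macro-round graphs. Let x : ℕ → ℝ^n be the quantized amortized mid-point execution: every x(0)_p lies in [0,1] and is an integer multiple of 1/Q, and for each ℓ ≥ 1 and each p, x(ℓ)_p = ⌊Q·(m_p + M_p)/2⌋/Q, where m_p and M_p are the minimum and maximum of {x(ℓ−1)_q : q ∈ In_p(Ĝ(ℓ))}. Then δ(x(ℓ)) ≤ ε for every macro-round ℓ ≥ ⌊log₂((Q−2)/(Qε−2))⌋ + 1; in particular ε-agreement is achieved by round (n−1)·(⌊log₂((Q−2)/(Qε−2))⌋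 + 1). -/
/-- Rounding down to the nearest multiple of `1/Q`. -/
noncomputable def roundQ (Q : ℕ) (v : ℝ) : ℝ := (⌊(Q : ℝ) * v⌋ : ℝ) / (Q : ℝ)

open Classical Finset

lemma ProdSeg_refl {n : ℕ} (G : ℕ → Fin n → Fin n → Prop)
    (hrefl : ∀ k, 1 ≤ k → ∀ p, G k p p) (a : ℕ) :
    ∀ m (p : Fin n), ProdSeg G a m p p
  | 0, _ => rfl
  | m + 1, p => ⟨p, ProdSeg_refl G hrefl a m p, hrefl _ (by omega) p⟩

/-- In-neighborhood of a finset. -/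
noncomputable def inF {n : ℕ} (H : Fin n → Fin n → Prop) (S : Finset (Fin n)) :
    Finset (Fin n) :=
  Finset.univ.filter (fun q => ∃ s ∈ S, H q s)

lemma mem_inF {n : ℕ} {H : Fin n → Fin n → Prop} {S : Finset (Fin n)} {q : Fin n} :
    q ∈ inF H S ↔ ∃ s ∈ S, H q s := by simp [inF]

lemma subset_inF {n : ℕ} {H : Fin n → Fin n → Prop} (hH : ∀ p, H p p) (S : Finset (Fin n)) :
    S ⊆ inF H S := fun q hq => mem_inF.2 ⟨q, hq, hH q⟩

lemma inF_grow {n : ℕ} {H : Fin n → Fin n → Prop} (hH : ∀ p, H p p) (hR : Rooted H)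
    {S T : Finset (Fin n)} (hS : S.Nonempty) (hT : T.Nonempty)
    (hd : Disjoint (inF H S) (inF H T)) :
    S.card + T.card + 1 ≤ (inF H S).card + (inF H T).card := by
  have hSsub := subset_inF hH S
  have hTsub := subset_inF hH T
  have hcS := Finset.card_le_card hSsub
  have hcT := Finset.card_le_card hTsub
  by_contra hlt
  push_neg at hlt
  have hSeq : S = inF H S := Finset.eq_of_subset_of_card_le hSsub (by omega)
  have hTeq : T = inF H T := Finset.eq_of_subset_of_card_le hTsub (by omega)
  obtain ⟨r, hr⟩ := hR
  have key : ∀ (U : Finset (Fin n)), U = inF H U → U.Nonempty → r ∈ U := by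
    rintro U hU ⟨v, hv⟩
    have : ∀ w, Relation.ReflTransGen H w v → w ∈ U := by
      intro w hw
      induction hw using Relation.ReflTransGen.head_induction_on with
      | refl => exact hv
      | head h _ ih => rw [hU]; exact mem_inF.2 ⟨_, ih, h⟩
    exact this r (hr v)
  have h1 : r ∈ S := key S hSeq hS
  have h2 : r ∈ T := key T hTeq hT
  rw [hSeq] at h1; rw [hTeq] at h2
  exact (Finset.disjoint_left.1 hd) h1 h2

noncomputable def preF {n : ℕ} (G : ℕ → Fin n → Fin n → Prop) (a m : ℕ)
    (S : Finset (Fin n)) : Finset (Fin n) :=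
  Finset.univ.filter (fun q => ∃ p ∈ S, ProdSeg G a m q p)

lemma mem_preF {n : ℕ} {G : ℕ → Fin n → Fin n → Prop} {a m : ℕ} {S : Finset (Fin n)}
    {q : Fin n} : q ∈ preF G a m S ↔ ∃ p ∈ S, ProdSeg G a m q p := by simp [preF]

lemma preF_succ {n : ℕ} (G : ℕ → Fin n → Fin n → Prop) (a m : ℕ) (S : Finset (Fin n)) :
    preF G a (m + 1) S = preF G a m (inF (G (a + m + 1)) S) := by
  ext q
  simp only [mem_preF, mem_inF, ProdSeg]
  constructor
  · rintro ⟨p, hp, r, hqr, hrp⟩; exact ⟨r, ⟨p, hp, hrp⟩, hqr⟩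
  · rintro ⟨r, ⟨p, hp, hrp⟩, hqr⟩; exact ⟨p, hp, r, hqr, hrp⟩

lemma subset_preF {n : ℕ} (G : ℕ → Fin n → Fin n → Prop)
    (hrefl : ∀ k, 1 ≤ k → ∀ p, G k p p) (a m : ℕ) (S : Finset (Fin n)) :
    S ⊆ preF G a m S :=
  fun q hq => mem_preF.2 ⟨q, hq, ProdSeg_refl G hrefl a m q⟩

lemma preF_grow {n : ℕ} (G : ℕ → Fin n → Fin n → Prop)
    (hrefl : ∀ k, 1 ≤ k → ∀ p, G k p p) (hrooted : ∀ k, 1 ≤ k → Rooted (G k)) (a : ℕ) :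
    ∀ m (S T : Finset (Fin n)), S.Nonempty → T.Nonempty →
      (∃ s, s ∈ preF G a m S ∧ s ∈ preF G a m T) ∨
      S.card + T.card + m ≤ (preF G a m S).card + (preF G a m T).card := by
  intro m
  induction m with
  | zero =>
    intro S T hS hT
    right
    have e : ∀ (U : Finset (Fin n)), preF G a 0 U = U := by
      intro U; ext q; simp [mem_preF, ProdSeg]
    rw [e, e]
    omega
  | succ m ih =>
    intro S T hS hT
    have hH : ∀ p, G (a + m + 1) p p := hrefl (a + m + 1) (by omega)
    set S' := inF (G (a + m + 1)) S with hS'def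
    set T' := inF (G (a + m + 1)) T with hT'def
    have hS' : S'.Nonempty := hS.mono (subset_inF hH S)
    have hT' : T'.Nonempty := hT.mono (subset_inF hH T)
    rw [preF_succ, preF_succ, ← hS'def, ← hT'def]
    by_cases hd : Disjoint S' T'
    · have h1 := inF_grow hH (hrooted (a + m + 1) (by omega)) hS hT hd
      rw [← hS'def, ← hT'def] at h1
      rcases ih S' T' hS' hT' with h | hcard
      · exact Or.inl h
      · right; omega
    · left
      obtain ⟨s, hs1, hs2⟩ := Finset.not_disjoint_iff.1 hd
      exact ⟨s, subset_preF G hrefl a m S' hs1, subset_preF G hrefl a m T' hs2⟩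

lemma exists_common {n : ℕ} (hn : 1 ≤ n) (G : ℕ → Fin n → Fin n → Prop)
    (hrefl : ∀ k, 1 ≤ k → ∀ p, G k p p) (hrooted : ∀ k, 1 ≤ k → Rooted (G k))
    (a : ℕ) (p q : Fin n) :
    ∃ s, ProdSeg G a (n - 1) s p ∧ ProdSeg G a (n - 1) s q := by
  have hmem : ∀ (r : Fin n) (s : Fin n), s ∈ preF G a (n-1) {r} → ProdSeg G a (n-1) s r := by
    intro r s hs
    obtain ⟨p', hp', h⟩ := mem_preF.1 hs
    rwa [Finset.mem_singleton.1 hp'] at h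
  rcases preF_grow G hrefl hrooted a (n - 1) {p} {q} ⟨p, Finset.mem_singleton_self p⟩
      ⟨q, Finset.mem_singleton_self q⟩ with ⟨s, h1, h2⟩ | hcard
  · exact ⟨s, hmem p s h1, hmem q s h2⟩
  · set A := preF G a (n - 1) {p}
    set B := preF G a (n - 1) {q}
    have hUI : (A ∪ B).card + (A ∩ B).card = A.card + B.card :=
      Finset.card_union_add_card_inter A B
    have hU : (A ∪ B).card ≤ n := by
      have := Finset.card_le_univ (A ∪ B)
      simpa using this
    simp only [Finset.card_singleton] at hcard
    have hpos : 0 < (A ∩ B).card := by omega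
    obtain ⟨s, hs⟩ := Finset.card_pos.1 hpos
    obtain ⟨hs1, hs2⟩ := Finset.mem_inter.1 hs
    exact ⟨s, hmem p s hs1, hmem q s hs2⟩

lemma roundQ_le {Q : ℕ} (hQ : 0 < Q) (v : ℝ) : roundQ Q v ≤ v := by
  have hQ0 : (0 : ℝ) < Q := by exact_mod_cast hQ
  rw [roundQ, div_le_iff₀ hQ0, mul_comm v]
  exact Int.floor_le _

lemma le_roundQ {Q : ℕ} (hQ : 0 < Q) (v : ℝ) : v - 1 / Q ≤ roundQ Q v := by
  have hQ0 : (0 : ℝ) < Q := by exact_mod_cast hQ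
  rw [roundQ, le_div_iff₀ hQ0]
  have h1 := Int.sub_one_lt_floor ((Q : ℝ) * v)
  have h2 : (v - 1 / Q) * Q = (Q : ℝ) * v - 1 := by field_simp
  linarith

lemma step_bound {n Q : ℕ} (hn : 2 ≤ n) (hQ : 3 ≤ Q)
    (G : ℕ → Fin n → Fin n → Prop)
    (hrefl : ∀ k, 1 ≤ k → ∀ p, G k p p)
    (hrooted : ∀ k, 1 ≤ k → Rooted (G k))
    (x : ℕ → Fin n → ℝ)
    (hupd : ∀ l, 1 ≤ l → ∀ p,
      x l p = roundQ Q
        ((sInf (x (l - 1) '' {q | ProdSeg G ((l - 1) * (n - 1)) (n - 1) q p}) +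
          sSup (x (l - 1) '' {q | ProdSeg G ((l - 1) * (n - 1)) (n - 1) q p})) / 2))
    (l : ℕ) :
    delta (x (l + 1)) ≤ delta (x l) / 2 + 1 / Q := by
  haveI : Nonempty (Fin n) := ⟨⟨0, by omega⟩⟩
  have hQpos : 0 < Q := by omega
  have hQ0 : (0 : ℝ) < Q := by exact_mod_cast hQpos
  set a := l * (n - 1) with ha
  set y := x l with hy
  have hupd' : ∀ p, x (l + 1) p = roundQ Q
      ((sInf (y '' {q | ProdSeg G a (n - 1) q p}) +
        sSup (y '' {q | ProdSeg G a (n - 1) q p})) / 2) := by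
    intro p
    have := hupd (l + 1) (by omega) p
    simpa [Nat.add_sub_cancel] using this
  have hrangefin : (Set.range y).Finite := Set.finite_range y
  have hrangene : (Set.range y).Nonempty := Set.range_nonempty y
  have hIfin : ∀ p : Fin n, (y '' {q | ProdSeg G a (n - 1) q p}).Finite :=
    fun p => Set.Finite.image y (Set.toFinite _)
  have hIne : ∀ p : Fin n, (y '' {q | ProdSeg G a (n - 1) q p}).Nonempty :=
    fun p => ⟨y p, p, ProdSeg_refl G hrefl a (n - 1) p, rfl⟩
  have hIsub : ∀ p : Fin n, y '' {q | ProdSeg G a (n - 1) q p} ⊆ Set.range y :=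
    fun p => Set.image_subset_range y _
  set M := sSup (Set.range y) with hM
  set m := sInf (Set.range y) with hm
  have key : ∀ p q : Fin n, x (l + 1) p - x (l + 1) q ≤ delta y / 2 + 1 / Q := by
    intro p q
    obtain ⟨s, hsp, hsq⟩ := exists_common (by omega) G hrefl hrooted a p q
    set Ip := y '' {q' | ProdSeg G a (n - 1) q' p} with hIp
    set Iq := y '' {q' | ProdSeg G a (n - 1) q' q} with hIq
    have hsmemp : y s ∈ Ip := ⟨s, hsp, rfl⟩
    have hsmemq : y s ∈ Iq := ⟨s, hsq, rfl⟩
    have h1 : sInf Ip ≤ y s := csInf_le ((hIfin p).bddBelow) hsmemp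
    have h2 : y s ≤ sSup Iq := le_csSup ((hIfin q).bddAbove) hsmemq
    have h3 : sSup Ip ≤ M := csSup_le_csSup hrangefin.bddAbove (hIne p) (hIsub p)
    have h4 : m ≤ sInf Iq := csInf_le_csInf hrangefin.bddBelow (hIne q) (hIsub q)
    have hp' := hupd' p
    have hq' := hupd' q
    have hb1 : x (l + 1) p ≤ (sInf Ip + sSup Ip) / 2 := by
      rw [hp']; exact roundQ_le hQpos _
    have hb2 : (sInf Iq + sSup Iq) / 2 - 1 / Q ≤ x (l + 1) q := by
      rw [hq']; exact le_roundQ hQpos _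
    have hd : delta y = M - m := rfl
    rw [hd]
    linarith
  set z := x (l + 1) with hz
  have hzfin : (Set.range z).Finite := Set.finite_range z
  have hzne : (Set.range z).Nonempty := Set.range_nonempty z
  obtain ⟨p0, hp0⟩ := hzne.csSup_mem hzfin
  obtain ⟨q0, hq0⟩ := hzne.csInf_mem hzfin
  have : delta z = z p0 - z q0 := by rw [delta, hp0, hq0]
  rw [this]
  exact key p0 q0

theorem quantized_amortized_midpoint_suboptimal_eps
    (n Q : ℕ) (hn : 2 ≤ n) (hQ : 3 ≤ Q) (ε : ℝ) (hε1 : 2 / (Q : ℝ) < ε) (hε2 : ε ≤ 1)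
    (G : ℕ → Fin n → Fin n → Prop)
    (hrefl : ∀ k, 1 ≤ k → ∀ p, G k p p)
    (hrooted : ∀ k, 1 ≤ k → Rooted (G k))
    (x : ℕ → Fin n → ℝ)
    (hx0 : ∀ p, x 0 p ∈ Set.Icc (0 : ℝ) 1 ∧ ∃ z : ℤ, x 0 p = (z : ℝ) / (Q : ℝ))
    -- at each macro-round `l ≥ 1`, each process `p` adopts the rounded mid-point
    -- `⌊Q·(m_p + M_p)/2⌋/Q` of the values received along the macro-round graph
    -- `Ĝ(l) = G((l−1)(n−1)+1) ∘ ⋯ ∘ G(l(n−1))`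
    (hupd : ∀ l, 1 ≤ l → ∀ p,
      x l p = roundQ Q
        ((sInf (x (l - 1) '' {q | ProdSeg G ((l - 1) * (n - 1)) (n - 1) q p}) +
          sSup (x (l - 1) '' {q | ProdSeg G ((l - 1) * (n - 1)) (n - 1) q p})) / 2)) :
    ∀ l : ℕ, ⌊Real.logb 2 (((Q : ℝ) - 2) / ((Q : ℝ) * ε - 2))⌋₊ + 1 ≤ l →
      delta (x l) ≤ ε := by
  intro l hl
  haveI : Nonempty (Fin n) := ⟨⟨0, by omega⟩⟩
  have hQR : (3 : ℝ) ≤ Q := by exact_mod_cast hQ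
  have hQ0 : (0 : ℝ) < Q := by linarith
  -- base bound
  have hbase : delta (x 0) ≤ 1 := by
    have h1 : sSup (Set.range (x 0)) ≤ 1 := by
      apply csSup_le (Set.range_nonempty _)
      rintro v ⟨p, rfl⟩
      exact (hx0 p).1.2
    have h2 : (0 : ℝ) ≤ sInf (Set.range (x 0)) := by
      apply le_csInf (Set.range_nonempty _)
      rintro v ⟨p, rfl⟩
      exact (hx0 p).1.1
    rw [delta]; linarith
  -- recursive bound
  have hrec : ∀ k : ℕ, delta (x k) ≤ (1 - 2 / Q) / 2 ^ k + 2 / Q := by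
    intro k
    induction k with
    | zero =>
      simp only [pow_zero, div_one]
      linarith
    | succ k ih =>
      have h1 := step_bound hn hQ G hrefl hrooted x hupd k
      have : ((1 - 2 / (Q:ℝ)) / 2 ^ k + 2 / Q) / 2 + 1 / Q
          = (1 - 2 / Q) / 2 ^ (k + 1) + 2 / Q := by ring
      linarith
  -- arithmetic
  have hεQ : (2 : ℝ) < Q * ε := by
    have := (div_lt_iff₀ hQ0).1 hε1
    linarith
  have hden : (0 : ℝ) < (Q : ℝ) * ε - 2 := by linarith
  set A := ((Q : ℝ) - 2) / ((Q : ℝ) * ε - 2) with hA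
  have hA0 : 0 < A := div_pos (by linarith) hden
  set L := ⌊Real.logb 2 A⌋₊ with hL
  have hpow : (0 : ℝ) < 2 ^ l := by positivity
  have hlog : Real.logb 2 A < (L : ℝ) + 1 := Nat.lt_floor_add_one _
  have h2 : A < 2 ^ (L + 1) := by
    calc A = (2 : ℝ) ^ Real.logb 2 A := (Real.rpow_logb two_pos (by norm_num) hA0).symm
      _ < (2 : ℝ) ^ ((L : ℝ) + 1) :=
        (Real.rpow_lt_rpow_left_iff (by norm_num)).2 hlog
      _ = (2 : ℝ) ^ (L + 1) := by
        rw [← Real.rpow_natCast 2 (L + 1)]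
        push_cast
        ring_nf
  have h3 : A ≤ 2 ^ l := by
    have hmono : (2 : ℝ) ^ (L + 1) ≤ 2 ^ l := by
      apply pow_le_pow_right₀ (by norm_num) hl
    linarith
  have h4 : (Q : ℝ) - 2 ≤ 2 ^ l * ((Q : ℝ) * ε - 2) := by
    have := (div_le_iff₀ hden).1 h3
    linarith
  have key2 : (1 : ℝ) - 2 / Q ≤ (ε - 2 / Q) * 2 ^ l := by
    have e1 : (1 : ℝ) - 2 / Q = ((Q : ℝ) - 2) / Q := by field_simp
    have e2 : (ε - 2 / (Q:ℝ)) * 2 ^ l = (2 ^ l * ((Q : ℝ) * ε - 2)) / Q := by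
      field_simp
    rw [e1, e2]
    gcongr
  have key3 : (1 - 2 / (Q:ℝ)) / 2 ^ l ≤ ε - 2 / Q := (div_le_iff₀ hpow).2 key2
  have := hrec l
  linarith
end
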